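/- The gossip monoid G_n equals the submonoid of n × n boolean matrices generated by the adjacency matrices of all equivalence relations on {1,…,n}. -/

import Mathlib

namespace Gossip

variable {n : ℕ}

/-- Boolean matrix multiplication over the semiring ({0,1}, max, min). -/
def bmul (A B : Matrix (Fin n) (Fin n) Bool) : Matrix (Fin n) (Fin n) Bool :=
  fun i j => decide (∃ k, A i k = true ∧ B k j = true)

/-- The identity boolean matrix. -/
def idm : Matrix (Fin n) (Fin n) Bool := fun a b => decide (a = b)

/-- The call matrix C[i,j]. -/
def call (i j : Fin n) : Matrix (Fin n) (Fin n) Bool :=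
  fun a b => decide (a = b ∨ (a = i ∧ b = j) ∨ (a = j ∧ b = i))

/-- Product of a list of boolean matrices (empty product is the identity). -/
def prodList : List (Matrix (Fin n) (Fin n) Bool) → Matrix (Fin n) (Fin n) Bool
  | [] => idm
  | M :: L => bmul M (prodList L)

/-- Membership in the gossip monoid `G_n`: a product of call matrices. -/
def InGossip (A : Matrix (Fin n) (Fin n) Bool) : Prop :=
  ∃ L : List (Fin n × Fin n), (∀ p ∈ L, p.1 ≠ p.2) ∧
    A = prodList (L.map fun p => call p.1 p.2)

/-- Membership in the submonoid generated by adjacency matrices of equivalence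
relations: a product of such adjacency matrices. -/
def InEqGen (A : Matrix (Fin n) (Fin n) Bool) : Prop :=
  ∃ L : List (Matrix (Fin n) (Fin n) Bool),
    (∀ M ∈ L, ∃ r : Fin n → Fin n → Prop,
      Equivalence r ∧ ∀ i j, M i j = true ↔ r i j) ∧
    A = prodList L

/-!
A call matrix `C[i,j]` is the adjacency matrix of the equivalence relation whose only
nontrivial class is `{i, j}`. Conversely, let `f i` be a representative of the class of `i`
for an equivalence relation `r`. The product `P` of the calls `C[i, f i]` is reflexive, relates
`i` and `f i` in both directions, and stays inside `r`; hence `P * P` is the adjacency matrix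
of `r`, since `a ~ b` gives `a → f a = f b → b`.
-/

lemma bmul_eq_true_iff {A B : Matrix (Fin n) (Fin n) Bool} {i j : Fin n} :
    bmul A B i j = true ↔ ∃ k, A i k = true ∧ B k j = true :=
  decide_eq_true_iff

lemma bmul_assoc (A B C : Matrix (Fin n) (Fin n) Bool) :
    bmul (bmul A B) C = bmul A (bmul B C) := by
  ext i j
  refine Bool.eq_iff_iff.2 ?_
  simp only [bmul_eq_true_iff]
  grind

lemma idm_bmul (A : Matrix (Fin n) (Fin n) Bool) : bmul idm A = A := by
  ext i j
  refine Bool.eq_iff_iff.2 ?_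
  simp [bmul_eq_true_iff, idm]

lemma prodList_append (L₁ L₂ : List (Matrix (Fin n) (Fin n) Bool)) :
    prodList (L₁ ++ L₂) = bmul (prodList L₁) (prodList L₂) := by
  induction L₁ with
  | nil => exact (idm_bmul _).symm
  | cons M L ih => rw [List.cons_append, prodList, prodList, ih, bmul_assoc]

lemma call_apply_self (i j a : Fin n) : call i j a a = true := by
  simp [call]

lemma apply_self_of_mem_map_call {L : List (Fin n × Fin n)} {M : Matrix (Fin n) (Fin n) Bool}
    (hM : M ∈ L.map fun p => call p.1 p.2) (a : Fin n) : M a a = true := by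
  obtain ⟨p, -, rfl⟩ := List.mem_map.1 hM
  exact call_apply_self _ _ a

lemma call_equivalence (i j : Fin n) : Equivalence fun a b => call i j a b = true := by
  simp only [call, decide_eq_true_iff]
  constructor <;> grind

lemma inGossip_idm : InGossip (idm : Matrix (Fin n) (Fin n) Bool) :=
  ⟨[], by simp, rfl⟩

lemma InGossip.bmul {A B : Matrix (Fin n) (Fin n) Bool} (hA : InGossip A)
    (hB : InGossip B) : InGossip (bmul A B) := by
  obtain ⟨L₁, h₁, rfl⟩ := hA
  obtain ⟨L₂, h₂, rfl⟩ := hB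
  refine ⟨L₁ ++ L₂, fun p hp => ?_, by rw [List.map_append, prodList_append]⟩
  exact (List.mem_append.mp hp).elim (h₁ p) (h₂ p)

lemma inGossip_prodList {L : List (Matrix (Fin n) (Fin n) Bool)}
    (hL : ∀ M ∈ L, InGossip M) : InGossip (prodList L) := by
  induction L with
  | nil => exact inGossip_idm
  | cons M L ih =>
    exact (hL M List.mem_cons_self).bmul (ih fun N hN => hL N (List.mem_cons_of_mem _ hN))

section Reflexive

variable {L : List (Matrix (Fin n) (Fin n) Bool)}

lemma prodList_apply_self (hL : ∀ M ∈ L, ∀ a, M a a = true) (a : Fin n) :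
    prodList L a a = true := by
  induction L with
  | nil => simp [prodList, idm]
  | cons M L ih =>
    exact bmul_eq_true_iff.2
      ⟨a, hL M List.mem_cons_self a, ih fun N hN => hL N (List.mem_cons_of_mem _ hN)⟩

lemma prodList_apply_of_mem (hL : ∀ M ∈ L, ∀ a, M a a = true)
    {M : Matrix (Fin n) (Fin n) Bool} (hM : M ∈ L) {a b : Fin n} (hab : M a b = true) :
    prodList L a b = true := by
  induction L with
  | nil => cases hM
  | cons N L ih =>
    have hL' : ∀ M ∈ L, ∀ a, M a a = true := fun M hM => hL M (List.mem_cons_of_mem _ hM)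
    rcases List.mem_cons.mp hM with rfl | hM
    · exact bmul_eq_true_iff.2 ⟨b, hab, prodList_apply_self hL' b⟩
    · exact bmul_eq_true_iff.2 ⟨a, hL N List.mem_cons_self a, ih hL' hM⟩

end Reflexive

lemma rel_of_prodList_eq_true {r : Fin n → Fin n → Prop} (hrefl : ∀ a, r a a)
    (htrans : ∀ {a b c}, r a b → r b c → r a c) {L : List (Matrix (Fin n) (Fin n) Bool)}
    (hL : ∀ M ∈ L, ∀ a b, M a b = true → r a b) {a b : Fin n}
    (hab : prodList L a b = true) : r a b := by
  induction L generalizing a with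
  | nil =>
    obtain rfl : a = b := of_decide_eq_true hab
    exact hrefl a
  | cons M L ih =>
    obtain ⟨k, hak, hkb⟩ := bmul_eq_true_iff.1 hab
    exact htrans (hL M List.mem_cons_self a k hak)
      (ih (fun N hN => hL N (List.mem_cons_of_mem _ hN)) hkb)

def starCalls (f : Fin n → Fin n) : List (Fin n × Fin n) :=
  ((List.finRange n).filter fun i => f i ≠ i).map fun i => (i, f i)

def starProduct (f : Fin n → Fin n) : Matrix (Fin n) (Fin n) Bool :=
  prodList ((starCalls f).map fun p => call p.1 p.2)

section StarProduct

variable (f : Fin n → Fin n)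

lemma inGossip_starProduct : InGossip (starProduct f) :=
  ⟨starCalls f, by simp only [starCalls, List.mem_map, List.mem_filter]; grind, rfl⟩

lemma starProduct_apply_self (a : Fin n) : starProduct f a a = true :=
  prodList_apply_self (fun _ => apply_self_of_mem_map_call) a

lemma starProduct_apply_map (a : Fin n) :
    starProduct f a (f a) = true ∧ starProduct f (f a) a = true := by
  by_cases h : f a = a
  · rw [h]
    exact ⟨starProduct_apply_self f a, starProduct_apply_self f a⟩
  · have hmem : call a (f a) ∈ (starCalls f).map fun p => call p.1 p.2 := by
      simp only [starCalls, List.map_map]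
      exact List.mem_map_of_mem (List.mem_filter.2 ⟨List.mem_finRange a, by simpa using h⟩)
    exact ⟨prodList_apply_of_mem (fun _ => apply_self_of_mem_map_call) hmem (by simp [call]),
      prodList_apply_of_mem (fun _ => apply_self_of_mem_map_call) hmem (by simp [call])⟩

lemma rel_of_starProduct_eq_true {r : Fin n → Fin n → Prop} (hr : Equivalence r)
    (hf : ∀ i, r i (f i)) {a b : Fin n} (hab : starProduct f a b = true) : r a b := by
  refine rel_of_prodList_eq_true hr.refl hr.trans ?_ hab
  simp only [starCalls, List.map_map, List.mem_map]
  rintro _ ⟨i, -, rfl⟩ a b hab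
  simp only [Function.comp, call, decide_eq_true_iff] at hab
  rcases hab with rfl | ⟨rfl, rfl⟩ | ⟨rfl, rfl⟩
  · exact hr.refl a
  · exact hf a
  · exact hr.symm (hf b)

end StarProduct

lemma inGossip_of_equivalence {r : Fin n → Fin n → Prop} (hr : Equivalence r)
    {M : Matrix (Fin n) (Fin n) Bool} (hM : ∀ i j, M i j = true ↔ r i j) : InGossip M := by
  let s : Setoid (Fin n) := ⟨r, hr⟩
  let f : Fin n → Fin n := fun i => (Quotient.mk s i).out
  have hf : ∀ i, r i (f i) := fun i => hr.symm (Quotient.mk_out (s := s) i)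
  have hf_eq : ∀ {i j}, r i j → f i = f j := fun h =>
    congrArg Quotient.out (Quotient.sound (s := s) h)
  suffices M = bmul (starProduct f) (starProduct f) by
    rw [this]
    exact (inGossip_starProduct f).bmul (inGossip_starProduct f)
  ext a b
  rw [Bool.eq_iff_iff, hM, bmul_eq_true_iff]
  constructor
  · intro hab
    exact ⟨f a, (starProduct_apply_map f a).1, hf_eq hab ▸ (starProduct_apply_map f b).2⟩
  · rintro ⟨k, hak, hkb⟩
    exact hr.trans (rel_of_starProduct_eq_true f hr hf hak)
      (rel_of_starProduct_eq_true f hr hf hkb)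

theorem stmt_13 (A : Matrix (Fin n) (Fin n) Bool) :
    InGossip A ↔ InEqGen A := by
  constructor
  · rintro ⟨L, -, rfl⟩
    refine ⟨L.map fun p => call p.1 p.2, ?_, rfl⟩
    simp only [List.mem_map]
    rintro _ ⟨⟨i, j⟩, -, rfl⟩
    exact ⟨_, call_equivalence i j, fun _ _ => Iff.rfl⟩
  · rintro ⟨L, hL, rfl⟩
    refine inGossip_prodList fun M hM => ?_
    obtain ⟨r, hr, hMr⟩ := hL M hM
    exact inGossip_of_equivalence hr hMr
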